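/- arXiv:math/9503230 — 2 statements merged into one kernel-verified Lean document; each statement's English description precedes it below -/
import Mathlib

section
/- Let p > 3 be a prime and x ∈ F_p with x ≠ 0 and x² + 1 ≠ 0. Then the double coset B·(1 0; x 1)·C₄ is the disjoint union of the two distinct right cosets B·(1 0; x 1) and B·(1 0; -1/x 1); moreover B·a₄·C₄ = B ⊔ B·a₄. If instead x² + 1 = 0, then B·(1 0; x 1)·C₄ equals the single coset B·(1 0; x 1). -/
/-!
Write `u(x)` for `unip p x`. Since `a₄² = -1` is central and lies in `B`, the double coset
`B g C₄` is `B g ∪ B g a₄` for every `g`. Right cosets `B g` and `B h` coincide when `g h⁻¹ ∈ B`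
and are disjoint otherwise. The lower-left entry of `u(x) a₄ u(z)` is `1 - x z`, so
`B u(x) a₄ = B u(-1/x)` when `x ≠ 0` and `B u(x) a₄ = B u(x)` when `x² = -1`; and
`u(x) u(-1/x)⁻¹ = u(x + 1/x) ∉ B` when `x² + 1 ≠ 0`.
-/

open Pointwise

namespace AdemNaffah

variable (p : ℕ)

/-- The Borel subgroup of `SL₂(𝔽_p)`: matrices with lower-left entry `0`. -/
def BorelSL2 : Subgroup (Matrix.SpecialLinearGroup (Fin 2) (ZMod p)) where
  carrier := {g | (g : Matrix (Fin 2) (Fin 2) (ZMod p)) 1 0 = 0}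
  one_mem' := by simp
  mul_mem' := by
    intro a b ha hb
    simp only [Set.mem_setOf_eq] at *
    rw [Matrix.SpecialLinearGroup.coe_mul, Matrix.mul_apply]
    simp [Fin.sum_univ_two, ha, hb]
  inv_mem' := by
    intro a ha
    simp only [Set.mem_setOf_eq] at *
    rw [Matrix.SpecialLinearGroup.SL2_inv_expl]
    simp [ha]

/-- The unipotent lower-triangular matrix `(1 0; x 1)` in `SL₂(𝔽_p)`. -/
def unip (x : ZMod p) : Matrix.SpecialLinearGroup (Fin 2) (ZMod p) :=
  ⟨!![1, 0; x, 1], by simp [Matrix.det_fin_two_of]⟩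

/-- The element `a₄ = (0 -1; 1 0)` of order 4. -/
def a4 : Matrix.SpecialLinearGroup (Fin 2) (ZMod p) :=
  ⟨!![0, -1; 1, 0], by simp [Matrix.det_fin_two_of]⟩

open MatrixGroups

section RightCoset

variable {G : Type*} [Group G] (H : Subgroup G)

theorem coe_mul_singleton_eq_op_smul (g : G) :
    (H : Set G) * {g} = MulOpposite.op g • (H : Set G) :=
  Set.image2_singleton_right

theorem mem_coe_mul_singleton_iff {g x : G} : x ∈ (H : Set G) * {g} ↔ x * g⁻¹ ∈ H := by
  rw [coe_mul_singleton_eq_op_smul, mem_rightCoset_iff, SetLike.mem_coe]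

theorem coe_mul_singleton_eq_iff {g h : G} :
    (H : Set G) * {g} = (H : Set G) * {h} ↔ g * h⁻¹ ∈ H := by
  rw [coe_mul_singleton_eq_op_smul, coe_mul_singleton_eq_op_smul, eq_comm, rightCoset_eq_iff]

theorem disjoint_coe_mul_singleton_iff {g h : G} :
    Disjoint ((H : Set G) * {g}) ((H : Set G) * {h}) ↔ g * h⁻¹ ∉ H := by
  refine ⟨fun hdisj hgh => ?_, fun hgh => Set.disjoint_left.2 fun x hxg hxh => hgh ?_⟩
  · rw [← coe_mul_singleton_eq_iff] at hgh
    have hg : g ∈ (H : Set G) * {g} := (mem_coe_mul_singleton_iff H).2 (by simp)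
    exact Set.disjoint_left.1 hdisj hg (hgh ▸ hg)
  · rw [mem_coe_mul_singleton_iff] at hxg hxh
    simpa [mul_assoc] using H.mul_mem (H.inv_mem hxg) hxh

theorem disjoint_coe_coe_mul_singleton_iff {g : G} :
    Disjoint (H : Set G) ((H : Set G) * {g}) ↔ g ∉ H := by
  simpa using disjoint_coe_mul_singleton_iff H (g := 1) (h := g)

theorem mul_mem_coe_mul_singleton {b g u : G} (hbH : b ∈ H) (hb : b ∈ Subgroup.center G)
    (hu : u ∈ (H : Set G) * {g}) : u * b ∈ (H : Set G) * {g} := by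
  rw [mem_coe_mul_singleton_iff] at hu ⊢
  rw [Subgroup.mem_center_iff.1 hb u, mul_assoc]
  exact H.mul_mem hbH hu

theorem coe_mul_singleton_mul_zpowers {a : G} (haH : a ^ 2 ∈ H) (ha : a ^ 2 ∈ Subgroup.center G)
    (g : G) :
    (H : Set G) * {g} * (Subgroup.zpowers a : Set G) =
      (H : Set G) * {g} ∪ (H : Set G) * {g * a} := by
  ext w
  constructor
  · rintro ⟨u, hu, _, ⟨n, rfl⟩, rfl⟩
    obtain ⟨k, rfl | rfl⟩ := Int.even_or_odd' n
    all_goals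
      have hub := mul_mem_coe_mul_singleton H (H.zpow_mem haH k)
        ((Subgroup.center G).zpow_mem ha k) hu
      simp only [zpow_add, zpow_mul, zpow_ofNat] at hub ⊢
    · exact Or.inl hub
    · refine Or.inr ((mem_coe_mul_singleton_iff H).2 ?_)
      rw [mem_coe_mul_singleton_iff] at hub
      simpa [mul_assoc] using hub
  · rintro (hw | hw)
    · simpa using Set.mul_mem_mul hw (Subgroup.one_mem (Subgroup.zpowers a))
    · rw [mem_coe_mul_singleton_iff] at hw
      have hwa : w * a⁻¹ ∈ (H : Set G) * {g} := by
        rwa [mem_coe_mul_singleton_iff, mul_assoc, ← mul_inv_rev]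
      simpa using Set.mul_mem_mul hwa (Subgroup.mem_zpowers a)

end RightCoset

theorem coe_unip (x : ZMod p) : (unip p x : Matrix (Fin 2) (Fin 2) (ZMod p)) = !![1, 0; x, 1] :=
  rfl

theorem coe_a4 : (a4 p : Matrix (Fin 2) (Fin 2) (ZMod p)) = !![0, -1; 1, 0] :=
  rfl

theorem mem_borelSL2_iff (g : SL(2, ZMod p)) :
    g ∈ BorelSL2 p ↔ (g : Matrix (Fin 2) (Fin 2) (ZMod p)) 1 0 = 0 :=
  Iff.rfl

theorem neg_one_mem_borelSL2 : (-1 : SL(2, ZMod p)) ∈ BorelSL2 p := by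
  simp [mem_borelSL2_iff]

theorem a4_notMem_borelSL2 [Nontrivial (ZMod p)] : a4 p ∉ BorelSL2 p := by
  simp [mem_borelSL2_iff, coe_a4]

theorem unip_mem_borelSL2_iff (x : ZMod p) : unip p x ∈ BorelSL2 p ↔ x = 0 := by
  simp [mem_borelSL2_iff, coe_unip]

theorem a4_mul_a4 : a4 p * a4 p = -1 := by
  ext i j
  fin_cases i <;> fin_cases j <;> simp [coe_a4]

theorem unip_add (x y : ZMod p) : unip p (x + y) = unip p x * unip p y := by
  ext i j
  fin_cases i <;> fin_cases j <;> simp [coe_unip]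

theorem unip_zero : unip p 0 = 1 := by
  ext i j
  fin_cases i <;> fin_cases j <;> rfl

theorem unip_neg (x : ZMod p) : unip p (-x) = (unip p x)⁻¹ :=
  eq_inv_of_mul_eq_one_left (by rw [← unip_add, neg_add_cancel, unip_zero])

theorem unip_mul_a4_mul_unip_mem_borelSL2_iff (x z : ZMod p) :
    unip p x * a4 p * unip p z ∈ BorelSL2 p ↔ x * z = 1 := by
  simp [mem_borelSL2_iff, coe_unip, coe_a4, ← sub_eq_add_neg, sub_eq_zero]
  exact eq_comm

theorem neg_one_mem_center : (-1 : SL(2, ZMod p)) ∈ Subgroup.center SL(2, ZMod p) :=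
  Subgroup.mem_center_iff.2 fun g => by simp

theorem borelSL2_mul_singleton_mul_zpowers_a4 (g : SL(2, ZMod p)) :
    (BorelSL2 p : Set SL(2, ZMod p)) * {g} * (Subgroup.zpowers (a4 p) : Set SL(2, ZMod p)) =
      (BorelSL2 p : Set SL(2, ZMod p)) * {g} ∪ (BorelSL2 p : Set SL(2, ZMod p)) * {g * a4 p} := by
  have ha4 : a4 p ^ 2 = -1 := by rw [sq, a4_mul_a4]
  exact coe_mul_singleton_mul_zpowers _ (ha4 ▸ neg_one_mem_borelSL2 p)
    (ha4 ▸ neg_one_mem_center p) g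

theorem borelSL2_mul_unip_mul_a4 [Fact p.Prime] {x : ZMod p} (hx : x ≠ 0) :
    (BorelSL2 p : Set SL(2, ZMod p)) * {unip p x * a4 p} =
      (BorelSL2 p : Set SL(2, ZMod p)) * {unip p (-x⁻¹)} := by
  rw [coe_mul_singleton_eq_iff, ← unip_neg, neg_neg, unip_mul_a4_mul_unip_mem_borelSL2_iff]
  exact mul_inv_cancel₀ hx

theorem borelSL2_mul_unip_mul_a4_of_sq_add_one_eq_zero {x : ZMod p} (hx : x ^ 2 + 1 = 0) :
    (BorelSL2 p : Set SL(2, ZMod p)) * {unip p x * a4 p} =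
      (BorelSL2 p : Set SL(2, ZMod p)) * {unip p x} := by
  rw [coe_mul_singleton_eq_iff, ← unip_neg, unip_mul_a4_mul_unip_mem_borelSL2_iff]
  linear_combination -hx

theorem unip_mul_inv_unip_neg_inv_notMem_borelSL2 [Fact p.Prime] {x : ZMod p} (hx : x ≠ 0)
    (hx2 : x ^ 2 + 1 ≠ 0) : unip p x * (unip p (-x⁻¹))⁻¹ ∉ BorelSL2 p := by
  rw [← unip_neg, neg_neg, ← unip_add, unip_mem_borelSL2_iff]
  intro h
  apply hx2
  linear_combination x * h - mul_inv_cancel₀ hx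

theorem doset_C4_decomposition (hp : p.Prime) (x : ZMod p) :
    (x ≠ 0 → x ^ 2 + 1 ≠ 0 →
      ((BorelSL2 p : Set (Matrix.SpecialLinearGroup (Fin 2) (ZMod p))) * {unip p x} *
          (Subgroup.zpowers (a4 p) : Set (Matrix.SpecialLinearGroup (Fin 2) (ZMod p))) =
        (BorelSL2 p : Set (Matrix.SpecialLinearGroup (Fin 2) (ZMod p))) * {unip p x} ∪
          (BorelSL2 p : Set (Matrix.SpecialLinearGroup (Fin 2) (ZMod p))) * {unip p (-x⁻¹)}) ∧
      Disjoint
        ((BorelSL2 p : Set (Matrix.SpecialLinearGroup (Fin 2) (ZMod p))) * {unip p x})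
        ((BorelSL2 p : Set (Matrix.SpecialLinearGroup (Fin 2) (ZMod p))) * {unip p (-x⁻¹)}) ∧
      (BorelSL2 p : Set (Matrix.SpecialLinearGroup (Fin 2) (ZMod p))) * {unip p x} ≠
        (BorelSL2 p : Set (Matrix.SpecialLinearGroup (Fin 2) (ZMod p))) * {unip p (-x⁻¹)}) ∧
    ((BorelSL2 p : Set (Matrix.SpecialLinearGroup (Fin 2) (ZMod p))) * {a4 p} *
        (Subgroup.zpowers (a4 p) : Set (Matrix.SpecialLinearGroup (Fin 2) (ZMod p))) =
      (BorelSL2 p : Set (Matrix.SpecialLinearGroup (Fin 2) (ZMod p))) ∪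
        (BorelSL2 p : Set (Matrix.SpecialLinearGroup (Fin 2) (ZMod p))) * {a4 p}) ∧
    Disjoint
      (BorelSL2 p : Set (Matrix.SpecialLinearGroup (Fin 2) (ZMod p)))
      ((BorelSL2 p : Set (Matrix.SpecialLinearGroup (Fin 2) (ZMod p))) * {a4 p}) ∧
    (x ^ 2 + 1 = 0 →
      (BorelSL2 p : Set (Matrix.SpecialLinearGroup (Fin 2) (ZMod p))) * {unip p x} *
          (Subgroup.zpowers (a4 p) : Set (Matrix.SpecialLinearGroup (Fin 2) (ZMod p))) =
        (BorelSL2 p : Set (Matrix.SpecialLinearGroup (Fin 2) (ZMod p))) * {unip p x}) := by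
  have := Fact.mk hp
  refine ⟨fun hx hx2 => ?_, ?_, ?_, fun hx2 => ?_⟩
  · have hnot := unip_mul_inv_unip_neg_inv_notMem_borelSL2 p hx hx2
    refine ⟨?_, ?_, ?_⟩
    · rw [borelSL2_mul_singleton_mul_zpowers_a4, borelSL2_mul_unip_mul_a4 p hx]
    · exact (disjoint_coe_mul_singleton_iff _).2 hnot
    · exact mt (coe_mul_singleton_eq_iff _).1 hnot
  · rw [borelSL2_mul_singleton_mul_zpowers_a4, a4_mul_a4,
      Subgroup.subgroup_mul_singleton (neg_one_mem_borelSL2 p), Set.union_comm]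
  · exact (disjoint_coe_coe_mul_singleton_iff _).2 (a4_notMem_borelSL2 p)
  · rw [borelSL2_mul_singleton_mul_zpowers_a4,
      borelSL2_mul_unip_mul_a4_of_sq_add_one_eq_zero p hx2, Set.union_self]

end AdemNaffah
end

section
/- Let p > 3 be a prime. Then H¹(SL₂(ℤ[1/p]), ℤ) = 0. -/
/-!
Since `H¹(G, ℤ) ≅ Hom(G, ℤ)` for trivial coefficients, it suffices to show that every
homomorphism `SL₂(ℤ[1/p]) → ℤ` vanishes. An additive map `ℤ[1/p] → ℤ` is zero because its values
are divisible by every power of `p`, so such a homomorphism kills all elementary matrices. These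
generate `SL₂(ℤ[1/p])`: after multiplying by a common denominator `p^k` the first column of a
matrix becomes an integer vector, the Euclidean algorithm on it is carried out by left
multiplication with elementary matrices, and it ends at an upper triangular matrix, which is
itself a product of elementary matrices.
-/

open scoped MatrixGroups

theorem AddMonoidHom.eq_zero_of_isUnit_intCast {R : Type*} [Ring R] {n : ℤ} (hn : n.natAbs ≠ 1)
    (hu : IsUnit (n : R)) (g : R →+ ℤ) : g = 0 := by
  ext x
  by_contra hx
  refine Int.finiteMultiplicity_iff.2 ⟨hn, hx⟩ |> FiniteMultiplicity.not_iff_forall.2 fun k => ?_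
  obtain ⟨u, hu⟩ := hu.pow k
  refine ⟨g (↑u⁻¹ * x), ?_⟩
  rw [← smul_eq_mul, ← map_zsmul, zsmul_eq_mul, Int.cast_pow, ← hu, Units.mul_inv_cancel_left]

namespace Matrix.SpecialLinearGroup

variable {R : Type*} [CommRing R]

def upperUnipotent (x : R) : SL(2, R) := ⟨!![1, x; 0, 1], by simp⟩

def lowerUnipotent (x : R) : SL(2, R) := ⟨!![1, 0; x, 1], by simp⟩

@[simp]
theorem coe_upperUnipotent (x : R) :
    (upperUnipotent x : Matrix (Fin 2) (Fin 2) R) = !![1, x; 0, 1] :=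
  rfl

@[simp]
theorem coe_lowerUnipotent (x : R) :
    (lowerUnipotent x : Matrix (Fin 2) (Fin 2) R) = !![1, 0; x, 1] :=
  rfl

theorem upperUnipotent_add (x y : R) :
    upperUnipotent (x + y) = upperUnipotent x * upperUnipotent y := by
  ext : 1; simp [add_comm]

theorem lowerUnipotent_add (x y : R) :
    lowerUnipotent (x + y) = lowerUnipotent x * lowerUnipotent y := by
  ext : 1; simp

variable (R) in
def elementarySubgroup : Subgroup SL(2, R) :=
  Subgroup.closure (Set.range upperUnipotent ∪ Set.range lowerUnipotent)

@[simp]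
theorem upperUnipotent_mem_elementarySubgroup (x : R) :
    upperUnipotent x ∈ elementarySubgroup R :=
  Subgroup.subset_closure (Or.inl ⟨x, rfl⟩)

@[simp]
theorem lowerUnipotent_mem_elementarySubgroup (x : R) :
    lowerUnipotent x ∈ elementarySubgroup R :=
  Subgroup.subset_closure (Or.inr ⟨x, rfl⟩)

theorem mem_elementarySubgroup_of_apply_one_zero_eq_zero {A : SL(2, R)} (hA : A 1 0 = 0) :
    A ∈ elementarySubgroup R := by
  have hdet : A 0 0 * A 1 1 = 1 := by
    have := A.det_coe
    rwa [det_fin_two, hA, mul_zero, sub_zero] at this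
  -- With `u = A 0 0`, `v = A 1 1`: `A = upperUnipotent (A 0 1 * u) * diag(u, v)`, and
  -- `diag(u, v) = w(u) * w(-1)` where
  -- `w(u) = upperUnipotent u * lowerUnipotent (-v) * upperUnipotent u = !![0, u; -v, 0]`.
  have hA_eq : A = upperUnipotent (A 0 1 * A 0 0) * upperUnipotent (A 0 0) *
      lowerUnipotent (-A 1 1) * upperUnipotent (A 0 0) * upperUnipotent (-1) * lowerUnipotent 1 *
      upperUnipotent (-1) := by
    ext i j
    fin_cases i <;> fin_cases j <;> simp [hA] <;> grind
  rw [hA_eq]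
  repeat' apply mul_mem
  all_goals simp

theorem mem_elementarySubgroup_of_mul_unit_eq_intCast (s : Rˣ) (A : SL(2, R)) (a c : ℤ)
    (ha : A 0 0 * s = a) (hc : A 1 0 * s = c) : A ∈ elementarySubgroup R := by
  by_cases hc0 : c = 0
  · refine mem_elementarySubgroup_of_apply_one_zero_eq_zero ?_
    simpa [hc0] using hc
  -- A Euclidean step: `B = !![0, -1; 1, -q] * A` has first column `(-c, a % c)`, scaled by `s⁻¹`.
  set q := a / c
  set B :=
    upperUnipotent (-1) * lowerUnipotent 1 * upperUnipotent (-1) * upperUnipotent (-q : R) * A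
  have hB0 : B 0 0 = -A 1 0 := by simp [B, coe_mul, mul_apply, Fin.sum_univ_two]
  have hB1 : B 1 0 = A 0 0 - q * A 1 0 := by
    simp [B, coe_mul, mul_apply, Fin.sum_univ_two, sub_eq_add_neg]
  have hlt : (a % c).natAbs < c.natAbs := by
    have := Int.emod_nonneg a hc0
    have := Int.emod_lt a hc0
    omega
  have hB : B ∈ elementarySubgroup R :=
    mem_elementarySubgroup_of_mul_unit_eq_intCast s B (-c) (a % c)
      (by rw [hB0, neg_mul, hc, Int.cast_neg])
      (by rw [hB1, Int.emod_def]; push_cast; linear_combination ha - q * hc)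
  have hA : A = (upperUnipotent (-1) * lowerUnipotent 1 * upperUnipotent (-1) *
      upperUnipotent (-q : R))⁻¹ * B := by
    simp [B, mul_assoc]
  rw [hA]
  refine mul_mem (inv_mem ?_) hB
  repeat' apply mul_mem
  all_goals simp
termination_by c.natAbs

theorem elementarySubgroup_eq_top_of_isLocalization [Algebra ℤ R] (M : Submonoid ℤ)
    [IsLocalization M R] :
    elementarySubgroup R = ⊤ := by
  refine eq_top_iff.2 fun A _ => ?_
  obtain ⟨b, hb⟩ := IsLocalization.exist_integer_multiples_of_finite M ![A 0 0, A 1 0]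
  obtain ⟨a, ha⟩ := hb 0
  obtain ⟨c, hc⟩ := hb 1
  refine mem_elementarySubgroup_of_mul_unit_eq_intCast (IsLocalization.map_units R b).unit A a c
    ?_ ?_
  · simpa [mul_comm, Algebra.smul_def] using ha.symm
  · simpa [mul_comm, Algebra.smul_def] using hc.symm

theorem additive_addMonoidHom_int_eq_zero_of_isLocalization [Algebra ℤ R] (M : Submonoid ℤ)
    [IsLocalization M R] {n : ℤ} (hnM : n ∈ M) (hn : n.natAbs ≠ 1) (φ : Additive SL(2, R) →+ ℤ) :
    φ = 0 := by
  have hunit : IsUnit (n : R) := by simpa using IsLocalization.map_units R ⟨n, hnM⟩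
  have hvanish (e : R → SL(2, R)) (he : ∀ x y, e (x + y) = e x * e y) (x : R) :
      φ (.ofMul (e x)) = 0 := by
    refine DFunLike.congr_fun (AddMonoidHom.eq_zero_of_isUnit_intCast hn hunit
      (.mk' (fun x => φ (.ofMul (e x))) fun x y => ?_)) x
    rw [he, ofMul_mul, map_add]
  have hker : elementarySubgroup R ≤ (AddMonoidHom.toMultiplicativeRight φ).ker := by
    refine (Subgroup.closure_le _).2 ?_
    rintro _ (⟨x, rfl⟩ | ⟨x, rfl⟩)
    · simpa using hvanish _ upperUnipotent_add x
    · simpa using hvanish _ lowerUnipotent_add x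
  refine AddMonoidHom.ext fun A => ?_
  have hA : A.toMul ∈ elementarySubgroup R := by
    simp [elementarySubgroup_eq_top_of_isLocalization M]
  simpa using hker hA

end Matrix.SpecialLinearGroup

theorem H1_SL2_Z_inv_p_eq_zero_general (p : ℕ) (hp : p.Prime) :
    Subsingleton (groupCohomology (Rep.trivial ℤ
      (Matrix.SpecialLinearGroup (Fin 2) (Localization.Away (p : ℤ))) ℤ) 1) := by
  have hp1 : (p : ℤ).natAbs ≠ 1 := by simpa using hp.ne_one
  have hhom (φ : Additive SL(2, Localization.Away (p : ℤ)) →+ ℤ) : φ = 0 :=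
    Matrix.SpecialLinearGroup.additive_addMonoidHom_int_eq_zero_of_isLocalization _
      (Submonoid.mem_powers (p : ℤ)) hp1 φ
  have : Subsingleton (Additive SL(2, Localization.Away (p : ℤ)) →+ ℤ) :=
    ⟨fun φ ψ => (hhom φ).trans (hhom ψ).symm⟩
  exact ((CategoryTheory.forget _).mapIso (groupCohomology.H1IsoOfIsTrivial
    (Rep.trivial ℤ SL(2, Localization.Away (p : ℤ)) ℤ))).toEquiv.subsingleton

/-- For a prime `p > 3`, the first integral cohomology of `SL₂(ℤ[1/p])` vanishes. -/
theorem H1_SL2_Z_inv_p_eq_zero (p : ℕ) (hp : p.Prime) (hp3 : 3 < p) :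
    Subsingleton (groupCohomology (Rep.trivial ℤ
      (Matrix.SpecialLinearGroup (Fin 2) (Localization.Away (p : ℤ))) ℤ) 1) :=
  H1_SL2_Z_inv_p_eq_zero_general p hp
end
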